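/- Let $T^n = \mathbb{R}^n/\mathbb{Z}^n$ be the flat torus, let $g$ be a Hessian metric on $T^n$ (with respect to the standard flat connection $D$), and suppose $g = \tilde g + D\tilde\alpha$, where $\tilde g$ is a parallel (constant-coefficient) symmetric $2$-tensor and $\tilde\alpha$ is a closed $1$-form. Then $\tilde g$ is positive definite. Specifically: for any nonzero constant vector field $X$ on $T^n$, choosing a point $p$ where the function $\tilde\alpha(X)$ attains its maximum, one has $D\tilde\alpha(X,X)|_p = 0$ and hence $\tilde g(X,X) = g(X,X)|_p > 0$. -/

import Mathlib

open scoped BigOperators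

/-- Partial derivative `∂f/∂xⁱ` at `x`. -/
noncomputable def pd {n : ℕ} (f : (Fin n → ℝ) → ℝ) (i : Fin n) (x : Fin n → ℝ) : ℝ :=
  fderiv ℝ f x (Pi.single i 1)

/-- On the flat torus `Tⁿ = ℝⁿ/ℤⁿ` (modelled by ℤⁿ-periodic tensors on
`ℝⁿ`), let `g` be a Hessian metric and suppose `g = g̃ + Dα̃` with `g̃` a parallel
(constant-coefficient) symmetric 2-tensor `G` and `α̃` a closed 1-form.  Then `G` is
positive definite; specifically, for every nonzero constant vector field `X` and every
point `p` where the function `α̃(X)` attains its maximum, `Dα̃(X,X)|ₚ = X(α̃(X))|ₚ = 0`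
and hence `G(X,X) = g(X,X)|ₚ > 0`. -/
theorem torus_parallel_part_positive_definite {n : ℕ}
    (g : (Fin n → ℝ) → Fin n → Fin n → ℝ) (G : Fin n → Fin n → ℝ)
    (α : (Fin n → ℝ) → Fin n → ℝ)
    -- periodicity: all data descends to the torus `ℝⁿ/ℤⁿ`
    (hgper : ∀ (x : Fin n → ℝ) (e i j : Fin n), g (x + Pi.single e 1) i j = g x i j)
    (hαper : ∀ (x : Fin n → ℝ) (e j : Fin n), α (x + Pi.single e 1) j = α x j)
    (hαsmooth : ∀ j, ContDiff ℝ (⊤ : ℕ∞) fun x => α x j)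
    -- `g` is a Riemannian metric
    (hgsymm : ∀ x i j, g x i j = g x j i)
    (hgpos : ∀ (x : Fin n → ℝ) (X : Fin n → ℝ), X ≠ 0 →
      0 < ∑ i, ∑ j, g x i j * X i * X j)
    -- `g` is Hessian: `Dg` is totally symmetric
    (hHess : ∀ (x : Fin n → ℝ) (i j kk : Fin n),
      pd (fun y => g y i j) kk x = pd (fun y => g y kk j) i x)
    -- `G` is a parallel symmetric 2-tensor and `α̃` is closed
    (hGsymm : ∀ i j, G i j = G j i)
    (hαclosed : ∀ (x : Fin n → ℝ) (i j : Fin n),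
      pd (fun y => α y j) i x = pd (fun y => α y i) j x)
    -- the decomposition `g = g̃ + Dα̃`
    (hdecomp : ∀ (x : Fin n → ℝ) (i j : Fin n),
      g x i j = G i j + pd (fun y => α y j) i x) :
    (∀ X : Fin n → ℝ, X ≠ 0 → 0 < ∑ i, ∑ j, G i j * X i * X j) ∧
    (∀ (X : Fin n → ℝ), X ≠ 0 → ∀ p : Fin n → ℝ,
      IsMaxOn (fun x => ∑ j, α x j * X j) Set.univ p →
        fderiv ℝ (fun x => ∑ j, α x j * X j) p X = 0 ∧
        ∑ i, ∑ j, G i j * X i * X j = ∑ i, ∑ j, g p i j * X i * X j) := by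
  classical
  have hdiff : ∀ j, Differentiable ℝ fun x => α x j :=
    fun j => (hαsmooth j).differentiable (by simp)
  -- periodicity under integer translations
  have hper : ∀ (m : Fin n → ℤ) (x : Fin n → ℝ) (j : Fin n),
      α (x + fun i => (m i : ℝ)) j = α x j := by
    intro m x j
    have hstep : ∀ (k : ℤ) (e : Fin n) (y : Fin n → ℝ),
        α (y + (k : ℝ) • (Pi.single e 1 : Fin n → ℝ)) j = α y j := by
      intro k
      induction k using Int.induction_on with
      | zero => intro e y; simp
      | succ k ih =>
          intro e y
          have ih' := ih e y
          have heq : y + ((k : ℝ) + 1) • (Pi.single e 1 : Fin n → ℝ)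
              = (y + (k : ℝ) • (Pi.single e 1 : Fin n → ℝ)) + Pi.single e 1 := by
            module
          push_cast at ih' ⊢
          rw [heq, hαper, ih']
      | pred k ih =>
          intro e y
          have ih' := ih e y
          have heq : (y + (-(k : ℝ) - 1) • (Pi.single e 1 : Fin n → ℝ)) + Pi.single e 1
              = y + (-(k : ℝ)) • (Pi.single e 1 : Fin n → ℝ) := by
            module
          push_cast at ih' ⊢
          calc α (y + (-(k:ℝ) - 1) • (Pi.single e 1 : Fin n → ℝ)) j
              = α ((y + (-(k:ℝ) - 1) • (Pi.single e 1 : Fin n → ℝ)) + Pi.single e 1) j :=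
                (hαper _ e j).symm
            _ = α (y + (-(k:ℝ)) • (Pi.single e 1 : Fin n → ℝ)) j := by rw [heq]
            _ = α y j := ih'
    have hfin : ∀ s : Finset (Fin n), ∀ y : Fin n → ℝ,
        α (y + ∑ e ∈ s, (m e : ℝ) • (Pi.single e 1 : Fin n → ℝ)) j = α y j := by
      intro s
      induction s using Finset.induction_on with
      | empty => intro y; simp
      | insert _ _ hnotmem ih =>
          rename_i a s
          intro y
          rw [Finset.sum_insert hnotmem,
            add_comm ((m a : ℝ) • (Pi.single a 1 : Fin n → ℝ)), ← add_assoc,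
            hstep, ih]
    have hrw : (fun i => (m i : ℝ)) = ∑ e : Fin n, (m e : ℝ) • (Pi.single e 1 : Fin n → ℝ) := by
      funext i
      simp [Finset.sum_apply, Pi.single_apply]
    rw [hrw, hfin]
  -- the directional derivative formula
  have hfd : ∀ (X : Fin n → ℝ) (p : Fin n → ℝ),
      fderiv ℝ (fun x => ∑ j, α x j * X j) p X
        = ∑ i, ∑ j, pd (fun y => α y j) i p * X i * X j := by
    intro X p
    have h1 : fderiv ℝ (fun x => ∑ j, α x j * X j) p
        = ∑ j, X j • fderiv ℝ (fun x => α x j) p := by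
      rw [fderiv_fun_sum (fun j _ => ((hdiff j p).mul_const (X j)))]
      exact Finset.sum_congr rfl fun j _ => fderiv_mul_const (hdiff j p) (X j)
    have hX : X = ∑ i : Fin n, (X i) • (Pi.single i 1 : Fin n → ℝ) := by
      funext k
      simp [Finset.sum_apply, Pi.single_apply]
    have h2 : ∀ j, fderiv ℝ (fun x => α x j) p X
        = ∑ i, X i * pd (fun y => α y j) i p := by
      intro j
      conv_lhs => rw [hX]
      rw [map_sum]
      exact Finset.sum_congr rfl fun i _ => by rw [map_smul]; rfl
    rw [h1, ContinuousLinearMap.sum_apply]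
    rw [Finset.sum_comm]
    refine Finset.sum_congr rfl fun j _ => ?_
    rw [ContinuousLinearMap.smul_apply, h2, smul_eq_mul, Finset.mul_sum]
    exact Finset.sum_congr rfl fun i _ => by ring
  -- the second conjunct
  have key : ∀ (X : Fin n → ℝ), X ≠ 0 → ∀ p : Fin n → ℝ,
      IsMaxOn (fun x => ∑ j, α x j * X j) Set.univ p →
        fderiv ℝ (fun x => ∑ j, α x j * X j) p X = 0 ∧
        ∑ i, ∑ j, G i j * X i * X j = ∑ i, ∑ j, g p i j * X i * X j := by
    intro X _ p hmax
    have hloc : IsLocalMax (fun x => ∑ j, α x j * X j) p :=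
      Filter.Eventually.of_forall fun x => hmax (Set.mem_univ x)
    have hz : fderiv ℝ (fun x => ∑ j, α x j * X j) p = 0 := hloc.fderiv_eq_zero
    have hz' : fderiv ℝ (fun x => ∑ j, α x j * X j) p X = 0 := by rw [hz]; rfl
    refine ⟨hz', ?_⟩
    have hsum : ∑ i, ∑ j, g p i j * X i * X j
        = (∑ i, ∑ j, G i j * X i * X j)
          + ∑ i, ∑ j, pd (fun y => α y j) i p * X i * X j := by
      simp_rw [hdecomp, add_mul, Finset.sum_add_distrib]
    rw [hsum, ← hfd X p, hz', add_zero]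
  refine ⟨?_, key⟩
  intro X hX
  -- existence of a maximum point via compactness of the fundamental domain
  have hcont : Continuous fun x => ∑ j, α x j * X j :=
    continuous_finset_sum _ fun j _ => ((hαsmooth j).continuous).mul continuous_const
  have hK : IsCompact (Set.Icc (0 : Fin n → ℝ) 1) := isCompact_Icc
  have hne : (Set.Icc (0 : Fin n → ℝ) 1).Nonempty :=
    ⟨0, le_refl 0, fun i => zero_le_one⟩
  obtain ⟨p, hpK, hpmax⟩ := hK.exists_isMaxOn hne hcont.continuousOn
  have hmax : IsMaxOn (fun x => ∑ j, α x j * X j) Set.univ p := by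
    intro x _
    set m : Fin n → ℤ := fun i => ⌊x i⌋ with hm
    have hy : (x - fun i => (m i : ℝ)) ∈ Set.Icc (0 : Fin n → ℝ) 1 := by
      constructor
      · intro i
        simpa [hm] using sub_nonneg.mpr (Int.floor_le (x i))
      · intro i
        have h1 : x i - (⌊x i⌋ : ℝ) ≤ 1 := by
          have := (Int.lt_floor_add_one (x i)).le
          linarith
        simpa [hm] using h1
    have hxy : (fun x => ∑ j, α x j * X j) x
        = (fun x => ∑ j, α x j * X j) (x - fun i => (m i : ℝ)) := by
      refine Finset.sum_congr rfl fun j _ => ?_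
      have h := hper m (x - fun i => (m i : ℝ)) j
      have : (x - fun i => (m i : ℝ)) + (fun i => (m i : ℝ)) = x := by
        funext i; simp
      rw [this] at h
      rw [h]
    calc (fun x => ∑ j, α x j * X j) x
        = (fun x => ∑ j, α x j * X j) (x - fun i => (m i : ℝ)) := hxy
      _ ≤ (fun x => ∑ j, α x j * X j) p := hpmax hy
  obtain ⟨-, heq⟩ := key X hX p hmax
  rw [heq]
  exact hgpos p X hX
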